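/- Let X be a compact metric space, G a group acting minimally on X by homeomorphisms, H a real separable Hilbert space, and (Ψ, ρ) a continuous cocycle of affine isometries of H over this action. Let μ be a Borel probability measure on X that is quasi-invariant under the action (for each g ∈ G the pushforward of μ is equivalent to μ). If ρ is a coboundary in the measurable bounded category — i.e., there exists a measurable essentially bounded φ : X → H such that for every g ∈ G, ρ(g,x) = φ(g·x) − Ψ(g,x)(φ(x)) for μ-almost every x ∈ X — then ρ is a coboundary in the continuous category: there exists a continuous φ' : X → H such that ρ(g,x) = φ'(g·x) − Ψ(g,x)(φ'(x)) for all g ∈ G and all x ∈ X. -/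

import Mathlib

/-!
The continuous transfer function is a circumcenter. For `x ∈ X` the points `ρ g (g⁻¹ x)` form a
set `O x ⊆ H`. It is bounded: the a.e. bound `‖ρ g‖ ≤ 2C` holds everywhere, since a
quasi-invariant measure for a minimal action on a compact space charges every nonempty open set.
The cocycle identity makes `O (g x)` the image of `O x` under the affine isometry
`v ↦ ρ g x + Ψ g x v`, so the unique circumcenter `φ' x` of `O x` satisfies
`φ' (g x) = ρ g x + Ψ g x (φ' x)` everywhere.

For continuity, the parallelogram law shows that two points whose farthest distance to a set is
close to its circumradius are close to each other. Hence the circumradius of `O x` is the limit of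
the circumradii of its finite subfamilies, so it is lower semicontinuous in `x`; being invariant,
it is constant by minimality. A finite subfamily capturing the radius at `x` still captures it
near `x`, and the parallelogram estimate then pins `φ'` down near `φ' x`.
-/

open Bornology Filter Metric MeasureTheory Set Topology

section SupDist

variable {P : Type*} [PseudoMetricSpace P] {S T : Set P} {c : P} {a : ℝ}

/-- The junk value `sSup ∅ = 0` makes this `0` for empty and for unbounded `T`. -/
noncomputable def supDist (c : P) (T : Set P) : ℝ := sSup (dist c '' T)

noncomputable def circumradius (T : Set P) : ℝ := ⨅ c, supDist c T

def IsCircumcenter (T : Set P) (c : P) : Prop := supDist c T = circumradius T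

theorem supDist_nonneg (c : P) (T : Set P) : 0 ≤ supDist c T :=
  Real.sSup_nonneg <| forall_mem_image.2 fun _ _ => dist_nonneg

theorem dist_le_supDist (hT : IsBounded T) {t : P} (ht : t ∈ T) : dist c t ≤ supDist c T := by
  obtain ⟨r, hr⟩ := (isBounded_iff_subset_closedBall c).1 hT
  refine le_csSup ⟨r, forall_mem_image.2 fun s hs => ?_⟩ (mem_image_of_mem _ ht)
  simpa [dist_comm] using hr hs

theorem supDist_le (h : ∀ t ∈ T, dist c t ≤ a) (ha : 0 ≤ a) : supDist c T ≤ a :=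
  Real.sSup_le (forall_mem_image.2 h) ha

theorem supDist_mono (hST : S ⊆ T) (hT : IsBounded T) : supDist c S ≤ supDist c T :=
  supDist_le (fun _ ht => dist_le_supDist hT (hST ht)) (supDist_nonneg c T)

theorem supDist_le_supDist_add_dist (hT : IsBounded T) (c c' : P) :
    supDist c T ≤ supDist c' T + dist c c' :=
  supDist_le
    (fun t ht => (dist_triangle c c' t).trans (by linarith [dist_le_supDist (c := c') hT ht]))
    (add_nonneg (supDist_nonneg c' T) dist_nonneg)

theorem continuous_supDist (hT : IsBounded T) : Continuous fun c => supDist c T :=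
  (LipschitzWith.of_le_add (supDist_le_supDist_add_dist hT)).continuous

theorem supDist_image_le_add {ι : Type*} {f g : ι → P} {s : Set ι} {d : ℝ}
    (hg : IsBounded (g '' s)) (hd : 0 ≤ d) (hfg : ∀ i ∈ s, dist (f i) (g i) ≤ d) :
    supDist c (f '' s) ≤ supDist c (g '' s) + d :=
  supDist_le
    (forall_mem_image.2 fun i hi => (dist_triangle c (g i) (f i)).trans <|
      add_le_add (dist_le_supDist hg (mem_image_of_mem g hi)) (dist_comm (f i) (g i) ▸ hfg i hi))
    (add_nonneg (supDist_nonneg c _) hd)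

theorem supDist_image (e : P ≃ᵢ P) (c : P) (T : Set P) :
    supDist (e c) (e '' T) = supDist c T := by
  simp only [supDist, image_image, e.dist_eq]

theorem circumradius_le_supDist (T : Set P) (c : P) : circumradius T ≤ supDist c T :=
  ciInf_le ⟨0, forall_mem_range.2 fun c => supDist_nonneg c T⟩ c

theorem le_circumradius [Nonempty P] (h : ∀ c, a ≤ supDist c T) : a ≤ circumradius T :=
  le_ciInf h

theorem circumradius_nonneg [Nonempty P] (T : Set P) : 0 ≤ circumradius T :=
  le_circumradius fun c => supDist_nonneg c T

theorem circumradius_mono [Nonempty P] (hST : S ⊆ T) (hT : IsBounded T) :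
    circumradius S ≤ circumradius T :=
  le_circumradius fun c => (circumradius_le_supDist S c).trans (supDist_mono hST hT)

theorem circumradius_image_le_add [Nonempty P] {ι : Type*} {f g : ι → P} {s : Set ι} {d : ℝ}
    (hg : IsBounded (g '' s)) (hd : 0 ≤ d) (hfg : ∀ i ∈ s, dist (f i) (g i) ≤ d) :
    circumradius (f '' s) ≤ circumradius (g '' s) + d :=
  sub_le_iff_le_add.1 <| le_circumradius fun c =>
    sub_le_iff_le_add.2 ((circumradius_le_supDist _ c).trans (supDist_image_le_add hg hd hfg))

theorem circumradius_image (e : P ≃ᵢ P) (T : Set P) : circumradius (e '' T) = circumradius T := by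
  simp only [circumradius, ← e.surjective.iInf_comp fun c => supDist c (e '' T), supDist_image]

theorem IsCircumcenter.image (e : P ≃ᵢ P) (hc : IsCircumcenter T c) :
    IsCircumcenter (e '' T) (e c) := by
  rw [IsCircumcenter, supDist_image, circumradius_image, hc]

end SupDist

section Circumcenter

variable {H : Type*} [NormedAddCommGroup H] [InnerProductSpace ℝ H] {T : Set H} {c c' : H}

/-- Apollonius' identity at the midpoint `m` of `c₁ c₂`, combined with
`circumradius T ≤ supDist m T`. -/
theorem dist_sq_le_supDist_sq (hne : T.Nonempty) (hT : IsBounded T) (c₁ c₂ : H) :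
    dist c₁ c₂ ^ 2 ≤ 2 * supDist c₁ T ^ 2 + 2 * supDist c₂ T ^ 2 - 4 * circumradius T ^ 2 := by
  set B := supDist c₁ T ^ 2 / 2 + supDist c₂ T ^ 2 / 2 - dist c₁ c₂ ^ 2 / 4 with hB_def
  have hB (t : H) (ht : t ∈ T) : dist t (midpoint ℝ c₁ c₂) ^ 2 ≤ B := by
    have h := EuclideanGeometry.dist_sq_add_dist_sq_eq_two_mul_dist_midpoint_sq_add_half_dist_sq
      t c₁ c₂
    have h₁ := pow_le_pow_left₀ dist_nonneg (dist_comm t c₁ ▸ dist_le_supDist hT ht) 2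
    have h₂ := pow_le_pow_left₀ dist_nonneg (dist_comm t c₂ ▸ dist_le_supDist hT ht) 2
    linarith
  obtain ⟨t, ht⟩ := hne
  have hB₀ : 0 ≤ B := (sq_nonneg _).trans (hB t ht)
  have hR : circumradius T ≤ √B := (circumradius_le_supDist T (midpoint ℝ c₁ c₂)).trans <|
    supDist_le (fun t ht => dist_comm t _ ▸ Real.le_sqrt_of_sq_le (hB t ht)) (Real.sqrt_nonneg B)
  linarith [(Real.le_sqrt (circumradius_nonneg T) hB₀).1 hR]

theorem IsCircumcenter.dist_sq_le (hne : T.Nonempty) (hT : IsBounded T)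
    (hc : IsCircumcenter T c) (c' : H) :
    dist c c' ^ 2 ≤ 2 * supDist c' T ^ 2 - 2 * circumradius T ^ 2 := by
  have h := dist_sq_le_supDist_sq hne hT c c'
  rw [hc] at h
  linarith

theorem IsCircumcenter.eq (hne : T.Nonempty) (hT : IsBounded T) (hc : IsCircumcenter T c)
    (hc' : IsCircumcenter T c') : c = c' := by
  have h := hc.dist_sq_le hne hT c'
  rw [hc'] at h
  exact dist_eq_zero.1 <| (pow_eq_zero_iff two_ne_zero).1 (le_antisymm (by linarith) (sq_nonneg _))

theorem exists_isCircumcenter [CompleteSpace H] (hne : T.Nonempty) (hT : IsBounded T) :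
    ∃ c, IsCircumcenter T c := by
  have hu (n : ℕ) : ∃ c, supDist c T < circumradius T + 1 / (n + 1) :=
    exists_lt_of_ciInf_lt (lt_add_of_pos_right _ Nat.one_div_pos_of_nat)
  choose u hu using hu
  have hv : Tendsto (fun n => supDist (u n) T) atTop (𝓝 (circumradius T)) :=
    tendsto_of_tendsto_of_tendsto_of_le_of_le tendsto_const_nhds
      (by simpa using tendsto_const_nhds.add (tendsto_one_div_add_atTop_nhds_zero_nat (𝕜 := ℝ)))
      (fun n => circumradius_le_supDist T (u n)) fun n => (hu n).le
  have hcauchy : CauchySeq u := by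
    rw [cauchySeq_iff_tendsto_dist_atTop_0, ← prod_atTop_atTop_eq]
    have hv₁ := hv.comp (tendsto_fst (g := (atTop : Filter ℕ)))
    have hv₂ := hv.comp (tendsto_snd (f := (atTop : Filter ℕ)))
    have hbound : Tendsto (fun p : ℕ × ℕ => √(2 * supDist (u p.1) T ^ 2
        + 2 * supDist (u p.2) T ^ 2 - 4 * circumradius T ^ 2)) (atTop ×ˢ atTop) (𝓝 0) := by
      have h := ((((hv₁.pow 2).const_mul 2).add ((hv₂.pow 2).const_mul 2)).sub_const
        (4 * circumradius T ^ 2)).sqrt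
      rwa [show 2 * circumradius T ^ 2 + 2 * circumradius T ^ 2 - 4 * circumradius T ^ 2 = 0 by
        ring, Real.sqrt_zero] at h
    exact squeeze_zero (fun _ => dist_nonneg)
      (fun p => Real.le_sqrt_of_sq_le (dist_sq_le_supDist_sq hne hT _ _)) hbound
  obtain ⟨c, hc⟩ := cauchySeq_tendsto_of_complete hcauchy
  exact ⟨c, tendsto_nhds_unique (((continuous_supDist hT).tendsto c).comp hc) hv⟩

variable [CompleteSpace H] {ι : Type*} {f : ι → H}

/-- Each `f i` is within `a` of the circumcenter of `f '' insert i F`, which the parallelogram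
estimate places near the circumcenter of `f '' F`. -/
theorem circumradius_range_le_add_sqrt {F : Finset ι} {a : ℝ} (hF : F.Nonempty)
    (ha : ∀ F' : Finset ι, circumradius (f '' F') ≤ a) :
    circumradius (range f) ≤ a + √(2 * a ^ 2 - 2 * circumradius (f '' F) ^ 2) := by
  classical
  have hb (F' : Finset ι) : IsBounded (f '' F') := (F'.finite_toSet.image f).isBounded
  have hne : (f '' F).Nonempty := (Finset.coe_nonempty.2 hF).image f
  obtain ⟨c, hc⟩ := exists_isCircumcenter hne (hb F)
  have ha₀ : 0 ≤ a := (circumradius_nonneg _).trans (ha F)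
  refine (circumradius_le_supDist _ c).trans <|
    supDist_le (forall_mem_range.2 fun i => ?_) (by positivity)
  obtain ⟨c', hc'⟩ :=
    exists_isCircumcenter ((Finset.coe_nonempty.2 (F.insert_nonempty i)).image f) (hb _)
  have hc'a : supDist c' (f '' ↑(insert i F)) ≤ a := hc'.trans_le (ha _)
  have h₁ : supDist c' (f '' F) ≤ a :=
    (supDist_mono (image_mono (Finset.coe_subset.2 (F.subset_insert i))) (hb _)).trans hc'a
  have h₂ : dist c c' ≤ √(2 * a ^ 2 - 2 * circumradius (f '' F) ^ 2) := by
    refine Real.le_sqrt_of_sq_le ((hc.dist_sq_le hne (hb F) c').trans ?_)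
    linarith [pow_le_pow_left₀ (supDist_nonneg _ _) h₁ 2]
  have h₃ : dist c' (f i) ≤ a :=
    (dist_le_supDist (hb _) (mem_image_of_mem f (F.mem_insert_self i))).trans hc'a
  linarith [dist_triangle c c' (f i)]

theorem tendsto_circumradius_image_finset [Nonempty ι] (hf : IsBounded (range f)) :
    Tendsto (fun F : Finset ι => circumradius (f '' F)) atTop (𝓝 (circumradius (range f))) := by
  have hmono : Monotone fun F : Finset ι => circumradius (f '' F) := fun F F' h =>
    circumradius_mono (image_mono (Finset.coe_subset.2 h)) (F'.finite_toSet.image f).isBounded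
  have hle (F : Finset ι) : circumradius (f '' F) ≤ circumradius (range f) :=
    circumradius_mono (image_subset_range f F) hf
  have hlim := tendsto_atTop_ciSup hmono ⟨_, forall_mem_range.2 hle⟩
  set a := ⨆ F : Finset ι, circumradius (f '' F)
  suffices circumradius (range f) ≤ a by rwa [le_antisymm this (ciSup_le hle)]
  have hsqrt : Tendsto (fun F : Finset ι => a + √(2 * a ^ 2 - 2 * circumradius (f '' F) ^ 2))
      atTop (𝓝 a) := by
    have h := (tendsto_const_nhds (x := a)).add
      ((tendsto_const_nhds (x := 2 * a ^ 2)).sub ((hlim.pow 2).const_mul 2)).sqrt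
    rwa [sub_self, Real.sqrt_zero, add_zero] at h
  obtain ⟨i⟩ := ‹Nonempty ι›
  refine ge_of_tendsto hsqrt ?_
  filter_upwards [eventually_ge_atTop {i}] with F hF
  exact circumradius_range_le_add_sqrt ⟨i, hF (Finset.mem_singleton_self i)⟩
    (le_ciSup ⟨_, forall_mem_range.2 hle⟩)

theorem exists_finset_lt_circumradius_image [Nonempty ι] (hf : IsBounded (range f)) {a : ℝ}
    (ha : a < circumradius (range f)) :
    ∃ F : Finset ι, F.Nonempty ∧ a < circumradius (f '' F) := by
  obtain ⟨i⟩ := ‹Nonempty ι›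
  obtain ⟨F, hFa, hiF⟩ := (((tendsto_circumradius_image_finset hf).eventually
    (lt_mem_nhds ha)).and (eventually_ge_atTop {i})).exists
  exact ⟨F, ⟨i, hiF (Finset.mem_singleton_self i)⟩, hFa⟩

end Circumcenter

section Family

variable {X : Type*} [TopologicalSpace X] {ι : Type*}

section PseudoMetric

variable {P : Type*} [PseudoMetricSpace P] {f : X → ι → P}

theorem eventually_forall_finset_dist_le (hf : ∀ i, Continuous fun x => f x i) (F : Finset ι)
    (x : X) {η : ℝ} (hη : 0 < η) : ∀ᶠ z in 𝓝 x, ∀ i ∈ F, dist (f z i) (f x i) ≤ η :=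
  (eventually_all_finset F).2 fun i _ =>
    (hf i).continuousAt.eventually (closedBall_mem_nhds (f x i) hη)

theorem continuous_circumradius_image_finset [Nonempty P] (hf : ∀ i, Continuous fun x => f x i)
    (F : Finset ι) : Continuous fun x => circumradius (f x '' F) := by
  refine continuous_iff_continuousAt.2 fun x => Metric.tendsto_nhds.2 fun ε hε => ?_
  filter_upwards [eventually_forall_finset_dist_le hf F x (half_pos hε)] with z hz
  have h₁ := circumradius_image_le_add (F.finite_toSet.image (f x)).isBounded
    (half_pos hε).le hz
  have h₂ := circumradius_image_le_add (F.finite_toSet.image (f z)).isBounded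
    (half_pos hε).le fun i hi => (dist_comm _ _).trans_le (hz i hi)
  rw [Real.dist_eq, abs_lt]
  constructor <;> linarith

end PseudoMetric

variable {H : Type*} [NormedAddCommGroup H] [InnerProductSpace ℝ H] [CompleteSpace H]
  [Nonempty ι] {f : X → ι → H}

theorem lowerSemicontinuous_circumradius_range (hf : ∀ i, Continuous fun x => f x i)
    (hb : ∀ x, IsBounded (range (f x))) :
    LowerSemicontinuous fun x => circumradius (range (f x)) := by
  intro x a ha
  obtain ⟨F, -, hF⟩ := exists_finset_lt_circumradius_image (hb x) ha
  filter_upwards [(continuous_circumradius_image_finset hf F).continuousAt.eventually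
    (lt_mem_nhds hF)] with z hz
  exact hz.trans_le (circumradius_mono (image_subset_range _ _) (hb z))

theorem continuous_of_isCircumcenter {c : X → H} (hf : ∀ i, Continuous fun x => f x i)
    (hb : ∀ x, IsBounded (range (f x))) (hc : ∀ x, IsCircumcenter (range (f x)) (c x))
    (hR : ∀ x y, circumradius (range (f x)) = circumradius (range (f y))) : Continuous c := by
  refine continuous_iff_continuousAt.2 fun x => Metric.tendsto_nhds.2 fun ε hε => ?_
  set r := circumradius (range (f x))
  have hr : 0 ≤ r := circumradius_nonneg _
  obtain ⟨η, hη, hηε⟩ : ∃ η > 0, 4 * (r + η) ^ 2 - 4 * max (r - η) 0 ^ 2 < ε ^ 2 := by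
    have h : Tendsto (fun η => 4 * (r + η) ^ 2 - 4 * max (r - η) 0 ^ 2) (𝓝[>] 0)
        (𝓝 (4 * (r + 0) ^ 2 - 4 * max (r - 0) 0 ^ 2)) :=
      (Continuous.tendsto (by fun_prop) 0).mono_left nhdsWithin_le_nhds
    rw [add_zero, sub_zero, max_eq_left hr, sub_self] at h
    exact ((eventually_mem_nhdsWithin (a := (0 : ℝ)) (s := Ioi 0)).and
      (h.eventually (gt_mem_nhds (pow_pos hε 2)))).exists
  obtain ⟨F, hFne, hF⟩ := exists_finset_lt_circumradius_image (hb x) (sub_lt_self r hη)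
  filter_upwards [(continuous_circumradius_image_finset hf F).continuousAt.eventually
    (lt_mem_nhds hF), eventually_forall_finset_dist_le hf F x hη] with z hz hnear
  have hbF (y : X) : IsBounded (f y '' F) := (F.finite_toSet.image (f y)).isBounded
  have h₁ : supDist (c z) (f z '' F) ≤ r + η :=
    ((supDist_mono (image_subset_range _ _) (hb z)).trans ((hc z).trans (hR z x)).le).trans
      (le_add_of_nonneg_right hη.le)
  have h₂ : supDist (c x) (f z '' F) ≤ r + η :=
    (supDist_image_le_add (hbF x) hη.le hnear).trans <| by
      gcongr
      exact (supDist_mono (image_subset_range _ _) (hb x)).trans (hc x).le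
  have h₃ : max (r - η) 0 ≤ circumradius (f z '' F) := max_le hz.le (circumradius_nonneg _)
  have key := dist_sq_le_supDist_sq ((Finset.coe_nonempty.2 hFne).image (f z)) (hbF z) (c z) (c x)
  refine lt_of_pow_lt_pow_left₀ 2 hε.le (lt_of_le_of_lt ?_ hηε)
  nlinarith [pow_le_pow_left₀ (supDist_nonneg _ _) h₁ 2,
    pow_le_pow_left₀ (supDist_nonneg _ _) h₂ 2, pow_le_pow_left₀ (le_max_right _ _) h₃ 2]

end Family

section MinimalAction

variable {G X : Type*} [TopologicalSpace X] {act : G → X → X}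

theorem eq_of_lowerSemicontinuous_of_invariant {u : X → ℝ} (hu : LowerSemicontinuous u)
    (hinv : ∀ g x, u (act g x) = u x) (hmin : ∀ x, Dense (range fun g => act g x)) (x y : X) :
    u x = u y := by
  have hle (x y : X) : u x ≤ u y := by
    by_contra! h
    obtain ⟨_, ⟨g, rfl⟩, hg⟩ :=
      ((mem_closure_iff_frequently.1 (hmin y x)).and_eventually (hu x _ h)).exists
    exact (hinv g y ▸ hg).false
  exact le_antisymm (hle x y) (hle y x)

variable [MeasurableSpace X] {μ : Measure X}

theorem isOpenPosMeasure_of_dense_orbits [CompactSpace X] [NeZero μ]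
    (hcont : ∀ g, Continuous (act g)) (hmin : ∀ x, Dense (range fun g => act g x))
    (hquasi : ∀ g, Measure.QuasiMeasurePreserving (act g) μ μ) : μ.IsOpenPosMeasure := by
  refine ⟨fun U hU hne hμU => NeZero.ne μ (Measure.measure_univ_eq_zero.1 ?_)⟩
  have hcover : univ ⊆ ⋃ g, act g ⁻¹' U := fun y _ => by
    obtain ⟨_, hz, g, rfl⟩ := (hmin y).inter_open_nonempty U hU hne
    exact mem_iUnion.2 ⟨g, hz⟩
  obtain ⟨F, hF⟩ := isCompact_univ.elim_finite_subcover _ (fun g => hU.preimage (hcont g)) hcover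
  exact measure_mono_null hF <|
    (measure_biUnion_null_iff F.countable_toSet).2 fun g _ => (hquasi g).preimage_null hμU

theorem norm_le_of_ae_eq_sub [μ.IsOpenPosMeasure] {E : Type*} [NormedAddCommGroup E]
    {g : X → X} (hg : Measure.QuasiMeasurePreserving g μ μ) {ρ φ : X → E} {A : X → E → E}
    (hρ : Continuous ρ) (hA : ∀ x v, ‖A x v‖ = ‖v‖) {C : ℝ} (hφ : ∀ᵐ x ∂μ, ‖φ x‖ ≤ C)
    (hρφ : ∀ᵐ x ∂μ, ρ x = φ (g x) - A x (φ x)) (x : X) : ‖ρ x‖ ≤ 2 * C := by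
  have hae : ∀ᵐ x ∂μ, ‖ρ x‖ ≤ 2 * C := by
    filter_upwards [hφ, hg.ae hφ, hρφ] with x h₁ h₂ h₃
    rw [h₃]
    linarith [norm_sub_le (φ (g x)) (A x (φ x)), hA x (φ x)]
  have hclosed : IsClosed {x | ‖ρ x‖ ≤ 2 * C} := isClosed_le hρ.norm continuous_const
  exact eq_univ_iff_forall.1 (hclosed.closure_eq ▸ (Measure.dense_of_ae hae).closure_eq) x

end MinimalAction

section Cocycle

variable {G X H : Type*} [Group G] [NormedAddCommGroup H] [InnerProductSpace ℝ H]
  {act : G → X → X} {Ψ : G → X → (H ≃ₗᵢ[ℝ] H)} {ρ : G → X → H}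

/-- `zeroSectionOrbit act ρ x g` is the `H`-coordinate of `g • (g⁻¹ x, 0)` for the skew-product
action `g • (x, v) = (act g x, ρ g x + Ψ g x v)` on `X × H`; its range is the fibre over `x` of
the orbit of the zero section. -/
def zeroSectionOrbit (act : G → X → X) (ρ : G → X → H) (x : X) (g : G) : H := ρ g (act g⁻¹ x)

theorem range_zeroSectionOrbit_act (hact_one : ∀ x, act 1 x = x)
    (hact_mul : ∀ g h x, act (g * h) x = act g (act h x))
    (hρ_coc : ∀ g h x, ρ (g * h) x = ρ g (act h x) + Ψ g (act h x) (ρ h x)) (h : G) (x : X) :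
    range (zeroSectionOrbit act ρ (act h x)) =
      ((Ψ h x).toIsometryEquiv.trans (IsometryEquiv.addLeft (ρ h x))) ''
        range (zeroSectionOrbit act ρ x) := by
  have key (g : G) : zeroSectionOrbit act ρ (act h x) (h * g) =
      ρ h x + Ψ h x (zeroSectionOrbit act ρ x g) := by
    have e₁ : act (h * g)⁻¹ (act h x) = act g⁻¹ x := by
      rw [← hact_mul, mul_inv_rev, inv_mul_cancel_right]
    have e₂ : act g (act g⁻¹ x) = x := by rw [← hact_mul, mul_inv_cancel, hact_one]
    rw [zeroSectionOrbit, e₁, hρ_coc, e₂, zeroSectionOrbit]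
  rw [← range_comp, ← (mul_left_surjective h).range_comp]
  exact congrArg range (funext key)

theorem circumradius_range_zeroSectionOrbit_act (hact_one : ∀ x, act 1 x = x)
    (hact_mul : ∀ g h x, act (g * h) x = act g (act h x))
    (hρ_coc : ∀ g h x, ρ (g * h) x = ρ g (act h x) + Ψ g (act h x) (ρ h x)) (h : G) (x : X) :
    circumradius (range (zeroSectionOrbit act ρ (act h x))) =
      circumradius (range (zeroSectionOrbit act ρ x)) := by
  rw [range_zeroSectionOrbit_act hact_one hact_mul hρ_coc, circumradius_image]

end Cocycle

theorem measurable_coboundary_implies_continuous_coboundary_general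
    {X : Type*} [MetricSpace X] [CompactSpace X] [MeasurableSpace X] [BorelSpace X]
    {G : Type*} [Group G]
    {H : Type*} [NormedAddCommGroup H] [InnerProductSpace ℝ H] [CompleteSpace H]
    (act : G → X → X)
    (hact_one : ∀ x, act 1 x = x)
    (hact_mul : ∀ g h x, act (g * h) x = act g (act h x))
    (hact_cont : ∀ g, Continuous (act g))
    (hmin : ∀ x, Dense (Set.range fun g => act g x))
    (Ψ : G → X → (H ≃ₗᵢ[ℝ] H)) (ρ : G → X → H)
    (hρ_cont : ∀ g, Continuous fun x => ρ g x)
    (hρ_coc : ∀ g h x, ρ (g * h) x = ρ g (act h x) + Ψ g (act h x) (ρ h x))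
    (μ : Measure X) [IsProbabilityMeasure μ]
    (hquasi : ∀ g, μ.map (act g) ≪ μ ∧ μ ≪ μ.map (act g))
    (φ : X → H)
    (hφ_bdd : ∃ C : ℝ, ∀ᵐ x ∂μ, ‖φ x‖ ≤ C)
    (hcobdd : ∀ g, ∀ᵐ x ∂μ, ρ g x = φ (act g x) - Ψ g x (φ x)) :
    ∃ φ' : X → H, Continuous φ' ∧ ∀ g x, ρ g x = φ' (act g x) - Ψ g x (φ' x) := by
  obtain ⟨C, hC⟩ := hφ_bdd
  have hqmp (g : G) : Measure.QuasiMeasurePreserving (act g) μ μ :=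
    ⟨(hact_cont g).measurable, (hquasi g).1⟩
  have := isOpenPosMeasure_of_dense_orbits hact_cont hmin hqmp
  have hρ_bdd (g : G) : ∀ x, ‖ρ g x‖ ≤ 2 * C :=
    norm_le_of_ae_eq_sub (hqmp g) (hρ_cont g) (fun x => (Ψ g x).norm_map) hC (hcobdd g)
  set O := zeroSectionOrbit act ρ
  have hO (x : X) : IsBounded (range (O x)) :=
    isBounded_iff_forall_norm_le.2 ⟨2 * C, forall_mem_range.2 fun g => hρ_bdd g _⟩
  choose φ' hφ' using fun x => exists_isCircumcenter (range_nonempty (O x)) (hO x)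
  have hequiv (g : G) (x : X) : φ' (act g x) = ρ g x + Ψ g x (φ' x) := by
    refine (hφ' _).eq (range_nonempty _) (hO _) ?_
    rw [range_zeroSectionOrbit_act hact_one hact_mul hρ_coc]
    exact (hφ' x).image _
  have hO_cont (g : G) : Continuous fun x => O x g := (hρ_cont g).comp (hact_cont g⁻¹)
  have hR := eq_of_lowerSemicontinuous_of_invariant
    (lowerSemicontinuous_circumradius_range hO_cont hO)
    (circumradius_range_zeroSectionOrbit_act hact_one hact_mul hρ_coc) hmin
  refine ⟨φ', continuous_of_isCircumcenter hO_cont hO hφ' hR, fun g x => ?_⟩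
  rw [hequiv, add_sub_cancel_right]

/-- **Corollary to Theorem C**: over a minimal group action, if the translation part of a
continuous cocycle of affine isometries is a coboundary in the measurable bounded category
(w.r.t. a quasi-invariant probability measure), then it is a coboundary in the continuous
category. -/
theorem measurable_coboundary_implies_continuous_coboundary
    {X : Type*} [MetricSpace X] [CompactSpace X] [MeasurableSpace X] [BorelSpace X]
    {G : Type*} [Group G]
    {H : Type*} [NormedAddCommGroup H] [InnerProductSpace ℝ H] [CompleteSpace H]
    [TopologicalSpace.SeparableSpace H] [MeasurableSpace H] [BorelSpace H]
    (act : G → X → X)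
    (hact_one : ∀ x, act 1 x = x)
    (hact_mul : ∀ g h x, act (g * h) x = act g (act h x))
    (hact_cont : ∀ g, Continuous (act g))
    (hmin : ∀ x, Dense (Set.range fun g => act g x))
    (Ψ : G → X → (H ≃ₗᵢ[ℝ] H)) (ρ : G → X → H)
    (hΨ_cont : ∀ g, Continuous fun x =>
      ((Ψ g x).toLinearIsometry.toContinuousLinearMap : H →L[ℝ] H))
    (hρ_cont : ∀ g, Continuous fun x => ρ g x)
    (hΨ_coc : ∀ g h x v, Ψ (g * h) x v = Ψ g (act h x) (Ψ h x v))
    (hρ_coc : ∀ g h x, ρ (g * h) x = ρ g (act h x) + Ψ g (act h x) (ρ h x))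
    (μ : Measure X) [IsProbabilityMeasure μ]
    (hquasi : ∀ g, μ.map (act g) ≪ μ ∧ μ ≪ μ.map (act g))
    (φ : X → H) (hφ_meas : Measurable φ)
    (hφ_bdd : ∃ C : ℝ, ∀ᵐ x ∂μ, ‖φ x‖ ≤ C)
    (hcobdd : ∀ g, ∀ᵐ x ∂μ, ρ g x = φ (act g x) - Ψ g x (φ x)) :
    ∃ φ' : X → H, Continuous φ' ∧ ∀ g x, ρ g x = φ' (act g x) - Ψ g x (φ' x) :=
  measurable_coboundary_implies_continuous_coboundary_general act hact_one hact_mul hact_cont hmin Ψ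
    ρ hρ_cont hρ_coc μ hquasi φ hφ_bdd hcobdd
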